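/- Let Λ : L × W → [0,∞] be a dissimilarity, let α be a translation function, let T : L → [0,∞] be an α-truncation function for Λ, and let Γ be the T-truncation of Λ. Then for every t ∈ [0,∞], the Dowker nerve of Γ is contained in the Dowker nerve of Λ, i.e. NΓ_t ⊆ NΛ_t, and moreover for every finite σ ∈ NΛ_t there exists τ ∈ NΓ_{α(t)} with σ ∪ τ ∈ NΛ_{α(t)}; in particular the map NΛ_t → NΛ_{α(t)} factors up to the witness τ through NΓ_{α(t)}, where τ can be taken to be f(σ) for a single function f : L → L satisfying: for all l ∈ L and w ∈ W with Λ(l,w) < t, both Λ(f(l),w) < α(t) and Λ(f(l),w) < T(f(l)) hold. -/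

import Mathlib

open scoped ENNReal Classical

/-- `σ` is a simplex of the Dowker nerve of `Λ` in filtration degree `t`. -/
def InNerve {L W : Type*} (Λ : L → W → ℝ≥0∞) (t : ℝ≥0∞) (σ : Finset L) : Prop :=
  ∃ w, ∀ l ∈ σ, Λ l w < t

/-- `T` is an `α`-truncation function for `Λ`. -/
def IsTruncation {L W : Type*} (Λ : L → W → ℝ≥0∞) (α : ℝ≥0∞ → ℝ≥0∞)
    (T : L → ℝ≥0∞) : Prop :=
  ∀ (t : ℝ≥0∞) (l : L), ∃ l', ∀ w, Λ l w < t → Λ l' w < α t ∧ Λ l' w < T l'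

/-- The `T`-truncation `Γ` of `Λ`. -/
noncomputable def truncation {L W : Type*} (Λ : L → W → ℝ≥0∞) (T : L → ℝ≥0∞) :
    L → W → ℝ≥0∞ :=
  fun l w => if Λ l w < T l then Λ l w else ⊤

section Truncation

variable {L W : Type*} (Λ : L → W → ℝ≥0∞) (T : L → ℝ≥0∞)

theorem le_truncation (l : L) (w : W) : Λ l w ≤ truncation Λ T l w := by
  unfold truncation
  split_ifs
  · exact le_rfl
  · exact le_top

theorem truncation_of_lt {l : L} {w : W} (h : Λ l w < T l) :
    truncation Λ T l w = Λ l w :=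
  if_pos h

end Truncation

namespace InNerve

variable {L W : Type*} {Λ Γ : L → W → ℝ≥0∞} {t t' : ℝ≥0∞} {σ : Finset L}

theorem of_le (hle : ∀ l w, Λ l w ≤ Γ l w) (h : InNerve Γ t σ) : InNerve Λ t σ :=
  let ⟨w, hw⟩ := h
  ⟨w, fun l hl => (hle l w).trans_lt (hw l hl)⟩

theorem image {f : L → L} (hf : ∀ l w, Λ l w < t → Γ (f l) w < t')
    (h : InNerve Λ t σ) : InNerve Γ t' (σ.image f) := by
  obtain ⟨w, hw⟩ := h
  refine ⟨w, fun l' hl' => ?_⟩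
  obtain ⟨l, hl, rfl⟩ := Finset.mem_image.mp hl'
  exact hf l w (hw l hl)

theorem union_image {f : L → L} (htt' : t ≤ t') (hf : ∀ l w, Λ l w < t → Λ (f l) w < t')
    (h : InNerve Λ t σ) : InNerve Λ t' (σ ∪ σ.image f) := by
  obtain ⟨w, hw⟩ := h
  refine ⟨w, fun l hl => ?_⟩
  rcases Finset.mem_union.mp hl with hσ | hfσ
  · exact (hw l hσ).trans_le htt'
  · obtain ⟨l₀, hl₀, rfl⟩ := Finset.mem_image.mp hfσ
    exact hf l₀ w (hw l₀ hl₀)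

end InNerve

theorem nerve_truncation_subset_and_factor_general {L W : Type*} (Λ : L → W → ℝ≥0∞)
    (α : ℝ≥0∞ → ℝ≥0∞) (hα : ∀ t, t ≤ α t)
    (T : L → ℝ≥0∞) (hT : IsTruncation Λ α T) (t : ℝ≥0∞) :
    (∀ σ : Finset L, InNerve (truncation Λ T) t σ → InNerve Λ t σ) ∧
    ∃ f : L → L,
      (∀ (l : L) (w : W), Λ l w < t →
        Λ (f l) w < α t ∧ Λ (f l) w < T (f l)) ∧
      (∀ σ : Finset L, InNerve Λ t σ →
        InNerve (truncation Λ T) (α t) (σ.image f) ∧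
          InNerve Λ (α t) (σ ∪ σ.image f)) := by
  refine ⟨fun σ => InNerve.of_le (le_truncation Λ T), ?_⟩
  choose f hf using hT t
  refine ⟨f, hf, fun σ hσ => ⟨?_, ?_⟩⟩
  · refine hσ.image fun l w hlw => ?_
    obtain ⟨hα_lt, hT_lt⟩ := hf l w hlw
    rwa [truncation_of_lt Λ T hT_lt]
  · exact hσ.union_image (hα t) fun l w hlw => (hf l w hlw).1

/-- `NΓ_t ⊆ NΛ_t`, and there is a single function `f : L → L`
such that for all `l, w` with `Λ(l,w) < t` both `Λ(f(l),w) < α(t)` and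
`Λ(f(l),w) < T(f(l))`, and such that every `σ ∈ NΛ_t` has
`f(σ) ∈ NΓ_{α(t)}` and `σ ∪ f(σ) ∈ NΛ_{α(t)}`, where `Γ` is the
`T`-truncation of `Λ`. -/
theorem nerve_truncation_subset_and_factor {L W : Type*} (Λ : L → W → ℝ≥0∞)
    (α : ℝ≥0∞ → ℝ≥0∞) (hmono : Monotone α) (hα : ∀ t, t ≤ α t)
    (T : L → ℝ≥0∞) (hT : IsTruncation Λ α T) (t : ℝ≥0∞) :
    (∀ σ : Finset L, InNerve (truncation Λ T) t σ → InNerve Λ t σ) ∧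
    ∃ f : L → L,
      (∀ (l : L) (w : W), Λ l w < t →
        Λ (f l) w < α t ∧ Λ (f l) w < T (f l)) ∧
      (∀ σ : Finset L, InNerve Λ t σ →
        InNerve (truncation Λ T) (α t) (σ.image f) ∧
          InNerve Λ (α t) (σ ∪ σ.image f)) :=
  nerve_truncation_subset_and_factor_general Λ α hα T hT t
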